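/- Let C be an N×q complex matrix and let s be a natural number. Then the minimum of Tr[(I_q + C^H P C)^{-1}] over all N×N orthogonal projections P (P^H = P, P^2 = P) of rank at most s equals max(q − s, 0) + Σ_{k=1}^{min(s,q)} 1/(1 + λ_k(C^H C)). In particular, increasing s beyond q yields no further reduction of the minimum MSE. -/

import Mathlib

/-!
Put `A = Cᴴ P C`. Because `P` is an orthogonal projection, `0 ≤ A ≤ Cᴴ C` in the Loewner order and
`rank A ≤ s`. Weyl's monotonicity theorem (a Courant–Fischer dimension count) then gives
`λ_k(A) ≤ λ_k(Cᴴ C)`, while `λ_k(A) = 0` for `k ≥ s`; since `Tr (1 + A)⁻¹ = ∑ₖ 1 / (1 + λ_k(A))`,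
this is the lower bound. It is attained by the projection onto the span of the `C vₖ`, `k < s`,
where the `vₖ` are eigenvectors of `Cᴴ C` for its largest eigenvalues: for that `P`, `Cᴴ P C` has
eigenvalues `λ_k(Cᴴ C)` for `k < s` and `0` otherwise.
-/

open Matrix

/-- The `k`-th largest eigenvalue (0-indexed: `k = 0` is the largest) of a
Hermitian matrix. -/
noncomputable def eigDesc {n : ℕ} {A : Matrix (Fin n) (Fin n) ℂ}
    (hA : A.IsHermitian) (k : Fin n) : ℝ :=
  (hA.eigenvalues ∘ Tuple.sort hA.eigenvalues) k.rev

open scoped MatrixOrder ComplexOrder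

theorem conjTranspose_diagonal_ofReal {n : Type*} [DecidableEq n] (r : n → ℝ) :
    (diagonal (fun i => (r i : ℂ)))ᴴ = diagonal (fun i => (r i : ℂ)) := by
  simp [diagonal_conjTranspose]

section UnitaryConj

variable {n : Type*} [Fintype n]

theorem diagonal_ofReal_mul_diagonal_ofReal [DecidableEq n] (a b : n → ℝ) :
    diagonal (fun i => (a i : ℂ)) * diagonal (fun i => (b i : ℂ))
      = diagonal (fun i => ((a i * b i : ℝ) : ℂ)) := by
  simp only [diagonal_mul_diagonal, Complex.ofReal_mul]

theorem trace_inv_one_add_unitary_conj_diagonal [DecidableEq n] {U : Matrix n n ℂ}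
    (hU : U ∈ unitaryGroup n ℂ) {ν : n → ℝ} (hν : ∀ i, 1 + ν i ≠ 0) :
    (trace ((1 + U * diagonal (fun i => (ν i : ℂ)) * star U)⁻¹)).re
      = ∑ i, 1 / (1 + ν i) := by
  have hUU : star U * U = 1 := mem_unitaryGroup_iff'.mp hU
  have hconj : 1 + U * diagonal (fun i => (ν i : ℂ)) * star U
      = U * diagonal (fun i => ((1 + ν i : ℝ) : ℂ)) * star U := by
    rw [← mem_unitaryGroup_iff.mp hU]
    simp only [Complex.ofReal_add, Complex.ofReal_one, ← diagonal_add, diagonal_one]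
    noncomm_ring
  have hdiag : (diagonal (fun i => ((1 + ν i : ℝ) : ℂ)))⁻¹
      = diagonal (fun i => (((1 + ν i)⁻¹ : ℝ) : ℂ)) := by
    refine inv_eq_left_inv ?_
    rw [diagonal_ofReal_mul_diagonal_ofReal, ← diagonal_one]
    congr 1
    ext i
    rw [inv_mul_cancel₀ (hν i), Complex.ofReal_one]
  rw [hconj, Matrix.mul_inv_rev, Matrix.mul_inv_rev, inv_eq_left_inv hUU,
    inv_eq_left_inv (mem_unitaryGroup_iff.mp hU), hdiag, trace_mul_comm, Matrix.mul_assoc,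
    hUU, Matrix.mul_one, trace_diagonal, Complex.re_sum]
  simp only [Complex.ofReal_re, one_div]

theorem dotProduct_mulVec_conj (U D : Matrix n n ℂ) (x : n → ℂ) :
    star x ⬝ᵥ ((U * D * star U) *ᵥ x)
      = star (star U *ᵥ x) ⬝ᵥ (D *ᵥ (star U *ᵥ x)) := by
  rw [← mulVec_mulVec, ← mulVec_mulVec, dotProduct_mulVec, star_mulVec, star_eq_conjTranspose,
    conjTranspose_conjTranspose]

theorem re_star_dotProduct_self (y : n → ℂ) :
    (star y ⬝ᵥ y).re = ∑ i, Complex.normSq (y i) := by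
  simp [dotProduct, Complex.re_sum, Complex.normSq_apply]

theorem re_dotProduct_diagonal_mulVec [DecidableEq n] (a : n → ℝ) (y : n → ℂ) :
    (star y ⬝ᵥ (diagonal (fun i => (a i : ℂ)) *ᵥ y)).re
      = ∑ i, a i * Complex.normSq (y i) := by
  simp only [dotProduct, mulVec_diagonal, Pi.star_apply, Complex.re_sum]
  refine Finset.sum_congr rfl fun i _ => ?_
  simp [Complex.mul_re, Complex.normSq_apply]
  ring

theorem re_dotProduct_conj_diagonal_mulVec [DecidableEq n] (U : Matrix n n ℂ) (a : n → ℝ)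
    (x : n → ℂ) :
    (star x ⬝ᵥ ((U * diagonal (fun i => (a i : ℂ)) * star U) *ᵥ x)).re
      = ∑ i, a i * Complex.normSq ((star U *ᵥ x) i) := by
  rw [dotProduct_mulVec_conj, re_dotProduct_diagonal_mulVec]

theorem sum_normSq_star_mulVec [DecidableEq n] {U : Matrix n n ℂ} (hU : U ∈ unitaryGroup n ℂ)
    (x : n → ℂ) :
    ∑ i, Complex.normSq ((star U *ᵥ x) i) = ∑ i, Complex.normSq (x i) := by
  have h := dotProduct_mulVec_conj U 1 x
  rw [Matrix.mul_one, mem_unitaryGroup_iff.mp hU, one_mulVec, one_mulVec] at h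
  rw [← re_star_dotProduct_self, ← re_star_dotProduct_self, h]

end UnitaryConj

section Weyl

variable {n : ℕ}

theorem mul_sum_le_sum_mul_of_antitone {a w : Fin n → ℝ} (ha : Antitone a) (hw : 0 ≤ w)
    {k : Fin n} (hwk : ∀ j, k < j → w j = 0) : a k * ∑ i, w i ≤ ∑ i, a i * w i := by
  rw [Finset.mul_sum]
  refine Finset.sum_le_sum fun j _ => ?_
  rcases lt_or_ge k j with hkj | hjk
  · simp [hwk j hkj]
  · exact mul_le_mul_of_nonneg_right (ha hjk) (hw j)

theorem sum_mul_le_mul_sum_of_antitone {a w : Fin n → ℝ} (ha : Antitone a) (hw : 0 ≤ w)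
    {k : Fin n} (hwk : ∀ j, j < k → w j = 0) : ∑ i, a i * w i ≤ a k * ∑ i, w i := by
  rw [Finset.mul_sum]
  refine Finset.sum_le_sum fun j _ => ?_
  rcases lt_or_ge j k with hjk | hkj
  · simp [hwk j hjk]
  · exact mul_le_mul_of_nonneg_right (ha hkj) (hw j)

theorem exists_ne_zero_mulVec_apply_eq_zero (U V : Matrix (Fin n) (Fin n) ℂ) (k : Fin n) :
    ∃ x : Fin n → ℂ, x ≠ 0 ∧ (∀ j, k < j → (U *ᵥ x) j = 0) ∧
      (∀ j, j < k → (V *ᵥ x) j = 0) := by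
  let L : (Fin n → ℂ) →ₗ[ℂ] (Set.Ioi k → ℂ) × (Set.Iio k → ℂ) :=
    (LinearMap.funLeft ℂ ℂ Subtype.val ∘ₗ U.mulVecLin).prod
      (LinearMap.funLeft ℂ ℂ Subtype.val ∘ₗ V.mulVecLin)
  have hdim : Module.finrank ℂ ((Set.Ioi k → ℂ) × (Set.Iio k → ℂ))
      < Module.finrank ℂ (Fin n → ℂ) := by
    simp only [Module.finrank_prod, Module.finrank_fintype_fun_eq_card, Fintype.card_Ioi,
      Fintype.card_Iio, Fin.card_Ioi, Fin.card_Iio, Fintype.card_fin]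
    omega
  obtain ⟨x, hxL, hx0⟩ := (Submodule.ne_bot_iff _).mp (LinearMap.ker_ne_bot_of_finrank_lt hdim)
  have hLx : L x = 0 := hxL
  exact ⟨x, hx0, fun j hj => congrFun (congrArg Prod.fst hLx) ⟨j, hj⟩,
    fun j hj => congrFun (congrArg Prod.snd hLx) ⟨j, hj⟩⟩

theorem le_of_unitary_conj_diagonal_le {a b : Fin n → ℝ} (ha : Antitone a) (hb : Antitone b)
    {U V : Matrix (Fin n) (Fin n) ℂ} (hU : U ∈ unitaryGroup (Fin n) ℂ)
    (hV : V ∈ unitaryGroup (Fin n) ℂ)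
    (hle : U * diagonal (fun i => (a i : ℂ)) * star U
      ≤ V * diagonal (fun i => (b i : ℂ)) * star V) :
    a ≤ b := by
  intro k
  obtain ⟨x, hx0, hxU, hxV⟩ := exists_ne_zero_mulVec_apply_eq_zero (star U) (star V) k
  have hS : 0 < ∑ i, Complex.normSq (x i) := by
    obtain ⟨i, hi⟩ := Function.ne_iff.mp hx0
    exact Finset.sum_pos' (fun i _ => Complex.normSq_nonneg _)
      ⟨i, Finset.mem_univ i, Complex.normSq_pos.mpr hi⟩
  have hnn : ∀ W : Matrix (Fin n) (Fin n) ℂ, 0 ≤ fun i => Complex.normSq ((W *ᵥ x) i) :=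
    fun W i => Complex.normSq_nonneg _
  have hA := mul_sum_le_sum_mul_of_antitone ha (hnn (star U)) (k := k)
    fun j hj => by simp [hxU j hj]
  have hB := sum_mul_le_mul_sum_of_antitone hb (hnn (star V)) (k := k)
    fun j hj => by simp [hxV j hj]
  rw [← re_dotProduct_conj_diagonal_mulVec, sum_normSq_star_mulVec hU] at hA
  rw [← re_dotProduct_conj_diagonal_mulVec, sum_normSq_star_mulVec hV] at hB
  have hAB := hle.re_dotProduct_nonneg x
  rw [sub_mulVec, dotProduct_sub, map_sub, sub_nonneg] at hAB
  exact le_of_mul_le_mul_right (hA.trans (hAB.trans hB)) hS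

end Weyl

section EigDesc

variable {n : ℕ} {A : Matrix (Fin n) (Fin n) ℂ}

theorem eigDesc_antitone (hA : A.IsHermitian) : Antitone (eigDesc hA) :=
  fun _ _ hjk => Tuple.monotone_sort hA.eigenvalues (Fin.rev_le_rev.mpr hjk)

theorem exists_unitary_eq_conj_diagonal_eigDesc (hA : A.IsHermitian) :
    ∃ U ∈ unitaryGroup (Fin n) ℂ,
      A = U * diagonal (fun k => (eigDesc hA k : ℂ)) * star U := by
  set e : Fin n ≃ Fin n := Fin.revPerm.trans (Tuple.sort hA.eigenvalues)
  set W : Matrix (Fin n) (Fin n) ℂ := (hA.eigenvectorUnitary : Matrix (Fin n) (Fin n) ℂ)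
  refine ⟨W.submatrix id e, ?_, ?_⟩
  · rw [mem_unitaryGroup_iff, star_eq_conjTranspose, conjTranspose_submatrix,
      submatrix_mul_equiv, ← star_eq_conjTranspose,
      mem_unitaryGroup_iff.mp hA.eigenvectorUnitary.2]
    rfl
  · have hdiag : diagonal (fun k => (eigDesc hA k : ℂ))
        = (diagonal (RCLike.ofReal ∘ hA.eigenvalues)).submatrix e e := by
      rw [submatrix_diagonal_equiv]
      rfl
    rw [hdiag, star_eq_conjTranspose, conjTranspose_submatrix, submatrix_mul_equiv,
      submatrix_mul_equiv, submatrix_id_id, ← star_eq_conjTranspose]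
    conv_lhs => rw [hA.spectral_theorem, Unitary.conjStarAlgAut_apply]

theorem eigDesc_eq_zero_of_rank_le (hA : A.PosSemidef) {k : Fin n} (hk : A.rank ≤ k) :
    eigDesc hA.1 k = 0 := by
  by_contra hne
  have hpos : ∀ j ≤ k, eigDesc hA.1 j ≠ 0 := fun j hj =>
    ((lt_of_le_of_ne (hA.eigenvalues_nonneg _) (Ne.symm hne)).trans_le
      (eigDesc_antitone hA.1 hj)).ne'
  have hcard : Fintype.card (Set.Iic k) ≤ Fintype.card {i // hA.1.eigenvalues i ≠ 0} :=
    Fintype.card_le_of_injective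
      (fun j => ⟨Tuple.sort hA.1.eigenvalues j.1.rev, hpos j.1 j.2⟩)
      fun i j hij => Subtype.ext <|
        Fin.rev_injective ((Tuple.sort _).injective (congrArg Subtype.val hij))
  rw [Fintype.card_Iic, Fin.card_Iic, ← hA.1.rank_eq_card_non_zero_eigs] at hcard
  omega

end EigDesc

theorem IsStarProjection.conjTranspose_mul_mul_eq {m n : Type*} [Fintype m] [Fintype n]
    {P : Matrix m m ℂ} (hP : IsStarProjection P) (C : Matrix m n ℂ) :
    Cᴴ * P * C = (P * C)ᴴ * (P * C) := by
  rw [conjTranspose_mul, ← star_eq_conjTranspose P, hP.isSelfAdjoint.star_eq, Matrix.mul_assoc,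
    Matrix.mul_assoc, ← Matrix.mul_assoc P, hP.isIdempotentElem.eq]

theorem IsStarProjection.conjTranspose_mul_mul_le {m n : Type*} [Fintype m] [DecidableEq m]
    [Fintype n] {P : Matrix m m ℂ} (hP : IsStarProjection P) (C : Matrix m n ℂ) :
    Cᴴ * P * C ≤ Cᴴ * C := by
  rw [le_iff, show Cᴴ * C - Cᴴ * P * C = Cᴴ * (1 - P) * C by
    rw [Matrix.mul_sub, Matrix.sub_mul, Matrix.mul_one], hP.one_sub.conjTranspose_mul_mul_eq]
  exact posSemidef_conjTranspose_mul_self _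

section ColumnScaling

variable {m n : Type*} [Fintype m] [Fintype n] [DecidableEq n] {C : Matrix m n ℂ}
  {W : Matrix n n ℂ} {d : n → ℝ}

theorem conjTranspose_mul_self_mul_diagonal (hW : W ∈ unitaryGroup n ℂ)
    (hC : Cᴴ * C = W * diagonal (fun i => (d i : ℂ)) * star W) (r : n → ℝ) :
    (C * W * diagonal (fun i => (r i : ℂ)))ᴴ * (C * W * diagonal (fun i => (r i : ℂ)))
      = diagonal (fun i => ((r i ^ 2 * d i : ℝ) : ℂ)) := by
  have hWC : star W * (Cᴴ * C) * W = diagonal (fun i => (d i : ℂ)) := by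
    rw [hC, ← Matrix.mul_assoc, ← Matrix.mul_assoc, mem_unitaryGroup_iff'.mp hW, Matrix.one_mul,
      Matrix.mul_assoc, mem_unitaryGroup_iff'.mp hW, Matrix.mul_one]
  calc _ = diagonal (fun i => (r i : ℂ)) * (star W * (Cᴴ * C) * W)
          * diagonal (fun i => (r i : ℂ)) := by
        simp only [conjTranspose_mul, conjTranspose_diagonal_ofReal, Matrix.mul_assoc]
        rfl
    _ = diagonal (fun i => ((r i ^ 2 * d i : ℝ) : ℂ)) := by
        rw [hWC, diagonal_ofReal_mul_diagonal_ofReal, diagonal_ofReal_mul_diagonal_ofReal]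
        congr 1; funext i; congr 1; ring

theorem conjTranspose_mul_mul_self_mul_diagonal_mul (hW : W ∈ unitaryGroup n ℂ)
    (hC : Cᴴ * C = W * diagonal (fun i => (d i : ℂ)) * star W) (r : n → ℝ) :
    Cᴴ * ((C * W * diagonal (fun i => (r i : ℂ))) *
        (C * W * diagonal (fun i => (r i : ℂ)))ᴴ) * C
      = W * diagonal (fun i => ((d i * (r i ^ 2 * d i) : ℝ) : ℂ)) * star W := by
  have hWW : star W * W = 1 := mem_unitaryGroup_iff'.mp hW
  have hCW : Cᴴ * C * W = W * diagonal (fun i => (d i : ℂ)) := by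
    rw [hC, Matrix.mul_assoc, hWW, Matrix.mul_one]
  have hWC : star W * (Cᴴ * C) = diagonal (fun i => (d i : ℂ)) * star W := by
    rw [hC, ← Matrix.mul_assoc, ← Matrix.mul_assoc, hWW, Matrix.one_mul]
  calc _ = Cᴴ * C * W * diagonal (fun i => (r i : ℂ)) * diagonal (fun i => (r i : ℂ))
          * (star W * (Cᴴ * C)) := by
        simp only [conjTranspose_mul, conjTranspose_diagonal_ofReal, Matrix.mul_assoc]
        rfl
    _ = W * diagonal (fun i => ((d i * (r i ^ 2 * d i) : ℝ) : ℂ)) * star W := by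
        rw [hCW, hWC]
        simp only [Matrix.mul_assoc, diagonal_ofReal_mul_diagonal_ofReal]
        rw [← Matrix.mul_assoc (diagonal _) (diagonal _), diagonal_ofReal_mul_diagonal_ofReal]
        congr 3; funext i; congr 1; ring

end ColumnScaling

theorem exists_isStarProjection_conjTranspose_mul_mul_eq {m n : Type*} [Fintype m]
    [DecidableEq m] [Fintype n] [DecidableEq n] (C : Matrix m n ℂ) {W : Matrix n n ℂ}
    (hW : W ∈ unitaryGroup n ℂ) {d : n → ℝ} (hd : ∀ i, 0 ≤ d i)
    (hC : Cᴴ * C = W * diagonal (fun i => (d i : ℂ)) * star W) (T : Finset n) :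
    ∃ P : Matrix m m ℂ, IsStarProjection P ∧ P.rank ≤ T.card ∧
      Cᴴ * P * C
        = W * diagonal (fun i => ((if i ∈ T then d i else 0 : ℝ) : ℂ)) * star W := by
  -- `P` projects onto the span of the `C wᵢ / √dᵢ`, `i ∈ T`, which are orthonormal;
  -- `r i = 0` when `d i = 0`, because `(√0)⁻¹ = 0`.
  set r : n → ℝ := fun i => if i ∈ T then (√(d i))⁻¹ else 0 with hr
  set M : Matrix m n ℂ := C * W * diagonal (fun i => (r i : ℂ))
  have hr_sq : ∀ i, r i ^ 2 * d i = if i ∈ T ∧ d i ≠ 0 then 1 else 0 := by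
    intro i
    by_cases hi : i ∈ T <;> by_cases hdi : d i = 0 <;> simp [hr, hi, hdi]
    rw [Real.sq_sqrt (hd i), inv_mul_cancel₀ hdi]
  have hMproj : M * (Mᴴ * M) = M := by
    rw [conjTranspose_mul_self_mul_diagonal hW hC, Matrix.mul_assoc,
      diagonal_ofReal_mul_diagonal_ofReal]
    congr 2; funext i; congr 1
    rw [hr_sq]
    split_ifs with hi
    · rw [mul_one]
    · by_cases hiT : i ∈ T
      · simp [hr, hiT, show d i = 0 by tauto]
      · simp [hr, hiT]
  refine ⟨M * Mᴴ, ⟨?_, ?_⟩, ?_, ?_⟩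
  · rw [IsIdempotentElem, ← Matrix.mul_assoc, Matrix.mul_assoc M Mᴴ M, hMproj]
  · rw [IsSelfAdjoint, star_eq_conjTranspose, conjTranspose_mul, conjTranspose_conjTranspose]
  · calc (M * Mᴴ).rank ≤ M.rank := rank_mul_le_left _ _
      _ ≤ (diagonal (fun i => (r i : ℂ))).rank := rank_mul_le_right _ _
      _ = Fintype.card {i // (r i : ℂ) ≠ 0} := rank_diagonal _
      _ ≤ T.card := by
        rw [Fintype.card_subtype]
        refine Finset.card_le_card fun i hi => ?_
        by_contra hiT
        simp [hr, hiT] at hi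
  · rw [conjTranspose_mul_mul_self_mul_diagonal_mul hW hC]
    congr 3; funext i; congr 1
    rw [hr_sq]
    by_cases hi : i ∈ T <;> by_cases hdi : d i = 0 <;> simp [hi, hdi]

theorem sum_ite_lt_eq_sum_castLE_add_max {q : ℕ} (s : ℕ) (f : Fin q → ℝ) :
    ∑ k : Fin q, (if (k : ℕ) < s then f k else 1)
      = max ((q : ℝ) - s) 0 + ∑ k : Fin (min s q), f (Fin.castLE (min_le_right s q) k) := by
  have hfilter : Finset.univ.filter (fun k : Fin q => (k : ℕ) < s)
      = Finset.univ.map (Fin.castLEEmb (min_le_right s q)) := by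
    ext k
    simp only [Finset.mem_filter, Finset.mem_univ, true_and, Finset.mem_map, Fin.castLEEmb_apply]
    constructor
    · intro hk
      exact ⟨⟨k, lt_min hk k.2⟩, rfl⟩
    · rintro ⟨j, rfl⟩
      exact lt_of_lt_of_le j.2 (min_le_left s q)
  rw [Finset.sum_ite, Finset.sum_const, Finset.filter_not, Finset.card_univ_sdiff,
    Fin.card_filter_val_lt, hfilter, Finset.sum_map, Fintype.card_fin, nsmul_one, add_comm]
  congr 1
  rcases le_total s q with h | h
  · rw [min_eq_right h, Nat.cast_sub h, max_eq_left (by simpa using h)]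
  · rw [min_eq_left h, Nat.sub_self, Nat.cast_zero, max_eq_right (by simpa using h)]

theorem sum_le_re_trace_inv_one_add {n s : ℕ} {A B : Matrix (Fin n) (Fin n) ℂ}
    (hA : A.PosSemidef) (hB : B.IsHermitian) (hAB : A ≤ B) (hrank : A.rank ≤ s) :
    ∑ k : Fin n, (if (k : ℕ) < s then 1 / (1 + eigDesc hB k) else 1)
      ≤ (trace ((1 + A)⁻¹)).re := by
  obtain ⟨U, hU, hAU⟩ := exists_unitary_eq_conj_diagonal_eigDesc hA.1
  obtain ⟨V, hV, hBV⟩ := exists_unitary_eq_conj_diagonal_eigDesc hB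
  have hnonneg : ∀ k, 0 ≤ eigDesc hA.1 k := fun k => hA.eigenvalues_nonneg _
  have hle : eigDesc hA.1 ≤ eigDesc hB :=
    le_of_unitary_conj_diagonal_le (eigDesc_antitone _) (eigDesc_antitone _) hU hV
      (hAU ▸ hBV ▸ hAB)
  rw [hAU, trace_inv_one_add_unitary_conj_diagonal hU fun k => by linarith [hnonneg k]]
  refine Finset.sum_le_sum fun k _ => ?_
  split_ifs with hk
  · exact one_div_le_one_div_of_le (by linarith [hnonneg k]) (by linarith [hle k])
  · rw [eigDesc_eq_zero_of_rank_le hA (by omega), add_zero, div_one]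

/-- The minimum of the noiseless-fusion-center MSE `Tr[(I_q + Cᴴ P C)⁻¹]` over
all orthogonal projections `P` of rank at most `s` (the number of RF chains)
equals `max(q − s, 0) + Σ_{k=1}^{min(s,q)} 1/(1 + λ_k(Cᴴ C))`; in particular,
taking `s` beyond the parameter dimension `q` yields no further reduction. -/
theorem stmt4 {N q : ℕ} (C : Matrix (Fin N) (Fin q) ℂ) (s : ℕ)
    (hC : (Cᴴ * C).IsHermitian) :
    IsLeast
      {x : ℝ | ∃ P : Matrix (Fin N) (Fin N) ℂ,
        Pᴴ = P ∧ P * P = P ∧ P.rank ≤ s ∧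
        x = (Matrix.trace ((1 + Cᴴ * P * C)⁻¹)).re}
      (max ((q : ℝ) - s) 0 +
        ∑ k : Fin (min s q), 1 / (1 + eigDesc hC (Fin.castLE (min_le_right s q) k))) := by
  have hCpsd : (Cᴴ * C).PosSemidef := posSemidef_conjTranspose_mul_self C
  rw [← sum_ite_lt_eq_sum_castLE_add_max s fun k => 1 / (1 + eigDesc hC k)]
  constructor
  · have hnonneg : ∀ k, 0 ≤ eigDesc hC k := fun k => hCpsd.eigenvalues_nonneg _
    obtain ⟨V, hV, hCV⟩ := exists_unitary_eq_conj_diagonal_eigDesc hC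
    obtain ⟨P, hP, hPrank, hPC⟩ := exists_isStarProjection_conjTranspose_mul_mul_eq C hV hnonneg
      hCV (Finset.univ.filter fun k : Fin q => (k : ℕ) < s)
    refine ⟨P, hP.isSelfAdjoint.star_eq, hP.isIdempotentElem.eq, hPrank.trans ?_, ?_⟩
    · rw [Fin.card_filter_val_lt]
      exact min_le_right q s
    · rw [hPC, trace_inv_one_add_unitary_conj_diagonal hV fun k => ?_]
      · refine Finset.sum_congr rfl fun k _ => ?_
        by_cases hk : (k : ℕ) < s <;> simp [hk]
      · split_ifs <;> linarith [hnonneg k]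
  · rintro x ⟨P, hPH, hPP, hPrank, rfl⟩
    have hP : IsStarProjection P := ⟨hPP, hPH⟩
    exact sum_le_re_trace_inv_one_add
      (hP.conjTranspose_mul_mul_eq C ▸ posSemidef_conjTranspose_mul_self (P * C)) hC
      (hP.conjTranspose_mul_mul_le C)
      ((rank_mul_le_left _ _).trans ((rank_mul_le_right _ _).trans hPrank))
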